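/- arXiv:2305.17638 — 2 statements merged into one kernel-verified Lean document; each statement's English description precedes it below -/
import Mathlib

section
/- Let V be a finite-dimensional complex vector space of dimension r ≥ 1 and N a nilpotent endomorphism of V with N^{r-1} ≠ 0. Then for every H in the linear span of {N, N^2, ..., N^{r-1}}, there exists G ∈ End(V) such that [N, G] = H. -/
/-!
If `N ^ n v ≠ 0` and `N ^ (n + 1) = 0` in dimension `n + 1`, then `v, N v, …, N ^ n v` is a basis,
and the endomorphism `D` acting on it by `N ^ k v ↦ -k • N ^ k v` satisfies `[N, D] = N`.
Hence `[N, D N ^ k] = [N, D] N ^ k = N ^ (k + 1)`, so every power `N ^ (k + 1)`, and with it their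
span, lies in the range of the linear map `[N, ·]`.
-/

open Module

theorem mul_sub_mul_mul_pow_eq_pow_succ {A : Type*} [Ring A] {N D : A} (h : N * D - D * N = N)
    (k : ℕ) : N * (D * N ^ k) - D * N ^ k * N = N ^ (k + 1) := by
  rw [← mul_assoc, mul_assoc D, pow_mul_comm', ← mul_assoc, ← sub_mul, h, ← pow_succ']

namespace Module.End

variable {K V : Type*} [Field K] [AddCommGroup V] [Module K V]

theorem linearIndependent_pow_apply {f : End K V} {v : V} {n : ℕ}
    (hv : (f ^ (n + 1)) v = 0) (hv' : (f ^ n) v ≠ 0) :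
    LinearIndependent K fun i : Fin (n + 1) => (f ^ (i : ℕ)) v := by
  induction n generalizing v with
  | zero => simpa using hv'
  | succ n ih =>
    have hfv (k : ℕ) : (f ^ k) (f v) = (f ^ (k + 1)) v := by rw [pow_succ, mul_apply]
    have htail : Fin.tail (fun i : Fin (n + 2) => (f ^ (i : ℕ)) v) =
        fun i : Fin (n + 1) => (f ^ (i : ℕ)) (f v) := by
      ext i
      simp [Fin.tail, hfv]
    rw [← Fin.cons_self_tail (fun i : Fin (n + 2) => (f ^ (i : ℕ)) v), htail,
      linearIndependent_finCons]
    refine ⟨ih (by rwa [hfv]) (by rwa [hfv]), fun hmem => hv' ?_⟩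
    have hker : Submodule.span K (Set.range fun i : Fin (n + 1) => (f ^ (i : ℕ)) (f v)) ≤
        LinearMap.ker (f ^ (n + 1)) := by
      rw [Submodule.span_le]
      rintro _ ⟨i, rfl⟩
      simp only [SetLike.mem_coe, LinearMap.mem_ker, hfv]
      rw [← mul_apply, ← pow_add,
        show n + 1 + (i + 1) = i + (n + 1 + 1) by omega, pow_add, mul_apply, hv, map_zero]
    exact hker hmem

theorem exists_mul_sub_mul_eq_self_of_pow_apply [FiniteDimensional K V] {N : End K V} {v : V}
    {n : ℕ} (hrank : finrank K V = n + 1) (hv : (N ^ (n + 1)) v = 0) (hv' : (N ^ n) v ≠ 0) :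
    ∃ D : End K V, N * D - D * N = N := by
  let b := basisOfLinearIndependentOfCardEqFinrank' _ (linearIndependent_pow_apply hv hv')
    (by rw [Fintype.card_fin, hrank])
  have hb (i : Fin (n + 1)) : b i = (N ^ (i : ℕ)) v := by simp [b]
  let D := b.constr K fun i => -((i : ℕ) : K) • b i
  have hD (k : ℕ) : D ((N ^ k) v) = -(k : K) • (N ^ k) v := by
    rcases lt_or_ge k (n + 1) with hk | hk
    · have h := b.constr_basis K (fun i => -((i : ℕ) : K) • b i) ⟨k, hk⟩
      rwa [hb] at h
    · have hzero : (N ^ k) v = 0 := by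
        rw [← Nat.sub_add_cancel hk, pow_add, mul_apply, hv, map_zero]
      rw [hzero, map_zero, smul_zero]
  refine ⟨D, b.ext fun i => ?_⟩
  have hN : N ((N ^ (i : ℕ)) v) = (N ^ ((i : ℕ) + 1)) v := by rw [← mul_apply, pow_succ']
  simp only [hb, LinearMap.sub_apply, mul_apply, hD, map_smul, hN]
  push_cast
  module

theorem exists_mul_sub_mul_eq_self [FiniteDimensional K V] {N : End K V} (hnil : IsNilpotent N)
    (hN : N ^ (finrank K V - 1) ≠ 0) : ∃ D : End K V, N * D - D * N = N := by
  have hpow : N ^ finrank K V = 0 := by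
    simpa [hnil.charpoly_eq_X_pow_finrank] using N.aeval_self_charpoly
  obtain ⟨v, hv⟩ : ∃ v, (N ^ (finrank K V - 1)) v ≠ 0 := by
    contrapose! hN
    exact LinearMap.ext hN
  obtain ⟨n, hn⟩ : ∃ n, finrank K V = n + 1 :=
    Nat.exists_eq_add_one.mpr (finrank_pos_iff_exists_ne_zero.mpr ⟨v, ne_zero_of_map hv⟩)
  rw [hn, Nat.add_sub_cancel] at hv
  rw [hn] at hpow
  exact exists_mul_sub_mul_eq_self_of_pow_apply hn (by rw [hpow, LinearMap.zero_apply]) hv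

end Module.End

theorem stmt_1_general (V : Type*) [AddCommGroup V] [Module ℂ V] [FiniteDimensional ℂ V]
    (r : ℕ) (hdim : Module.finrank ℂ V = r)
    (N : Module.End ℂ V) (hnil : IsNilpotent N) (hN : N ^ (r - 1) ≠ 0) :
    ∀ H ∈ Submodule.span ℂ (Set.range fun i : Fin (r - 1) => N ^ ((i : ℕ) + 1)),
      ∃ G : Module.End ℂ V, N * G - G * N = H := by
  subst hdim
  obtain ⟨D, hD⟩ := Module.End.exists_mul_sub_mul_eq_self hnil hN
  have hspan : Submodule.span ℂ (Set.range fun i : Fin (finrank ℂ V - 1) => N ^ ((i : ℕ) + 1)) ≤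
      LinearMap.range (LinearMap.mulLeft ℂ N - LinearMap.mulRight ℂ N) :=
    Submodule.span_le.mpr <| Set.range_subset_iff.mpr fun i =>
      ⟨D * N ^ (i : ℕ), mul_sub_mul_mul_pow_eq_pow_succ hD i⟩
  exact fun H hH => hspan hH

/-- If `N` is a nilpotent endomorphism of an `r`-dimensional complex vector space
with `N^(r-1) ≠ 0`, then every `H` in the span of `{N, N², …, N^(r-1)}` is a
commutator `[N, G]` for some endomorphism `G`. -/
theorem stmt_1 (V : Type*) [AddCommGroup V] [Module ℂ V] [FiniteDimensional ℂ V]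
    (r : ℕ) (hr : 1 ≤ r) (hdim : Module.finrank ℂ V = r)
    (N : Module.End ℂ V) (hnil : IsNilpotent N) (hN : N ^ (r - 1) ≠ 0) :
    ∀ H ∈ Submodule.span ℂ (Set.range fun i : Fin (r - 1) => N ^ ((i : ℕ) + 1)),
      ∃ G : Module.End ℂ V, N * G - G * N = H :=
  stmt_1_general V r hdim N hnil hN
end

section
/- Let (E, h) be a Hermitian holomorphic vector bundle over an open subset U of ℂ with Chern connection ∇ = ∇_z dz + ∇_{z̄} dz̄, and let f be an endomorphism of E with h-adjoint f†, satisfying the harmonicity relation ∇_z∇_{z̄} - ∇_{z̄}∇_z + [f, f†] = 0. Then for any smooth section s of E: -∂_z∂_{z̄}|s|²_h = 2 Re h((-∇_z∇_{z̄} + f†∘f)s, s) - |∇_z s|²_h - |∇_{z̄} s|²_h - |f(s)|²_h - |f†(s)|²_h. -/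
/-!
Applying the compatibility relations twice gives
`∂_z∂_z̄ h(s,s) = h(∇_z∇_z̄ s, s) + |∇_z̄ s|² + |∇_z s|² + h(s, ∇_z̄∇_z s)`.
Harmonicity trades `∇_z̄∇_z s` for `∇_z∇_z̄ s + [f, f†] s`; by Hermitian symmetry
`h(∇_z∇_z̄ s, s) + h(s, ∇_z∇_z̄ s) = 2 Re h(∇_z∇_z̄ s, s)`, and by adjointness
`h(s, [f, f†] s) = |f† s|² - |f s|²`.
-/

section HermitianPairing

variable {S : Type*} {h : S → S → ℂ → ℂ}

theorem pairing_sub_right [AddCommGroup S] (haddr : ∀ u v w, h u (v + w) = h u v + h u w)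
    (u v w : S) : h u (v - w) = h u v - h u w :=
  (AddMonoidHom.mk' (h u) (haddr u)).map_sub v w

theorem pairing_self_eq_re (hherm : ∀ u v x, h v u x = starRingEnd ℂ (h u v x)) (u : S) (x : ℂ) :
    h u u x = (h u u x).re :=
  (Complex.conj_eq_iff_re.mp (hherm u u x).symm).symm

theorem dz_dzb_pairing {Dz Dzb : (ℂ → ℂ) → ℂ → ℂ} {covz covzb : S → S}
    (hDzadd : ∀ a b, Dz (a + b) = Dz a + Dz b)
    (hcompat₁ : ∀ u v, Dz (h u v) = h (covz u) v + h u (covzb v))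
    (hcompat₂ : ∀ u v, Dzb (h u v) = h (covzb u) v + h u (covz v)) (u v : S) :
    Dz (Dzb (h u v)) = h (covz (covzb u)) v + h (covzb u) (covzb v)
      + (h (covz u) (covz v) + h u (covzb (covz v))) := by
  rw [hcompat₂, hDzadd, hcompat₁, hcompat₁]

theorem covzb_covz_eq_of_harmonic [AddCommGroup S] {covz covzb fE fEd : S → S}
    (hharm : ∀ u, covz (covzb u) - covzb (covz u) + fE (fEd u) - fEd (fE u) = 0) (u : S) :
    covzb (covz u) = covz (covzb u) + fE (fEd u) - fEd (fE u) := by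
  rw [← sub_eq_zero, ← neg_eq_zero, ← hharm u]
  abel

end HermitianPairing

theorem stmt_15_general (S : Type*) [AddCommGroup S]
    (h : S → S → ℂ → ℂ)
    (haddr : ∀ u v w, h u (v + w) = h u v + h u w)
    (hherm : ∀ u v x, h v u x = (starRingEnd ℂ) (h u v x))
    (Dz Dzb : (ℂ → ℂ) → ℂ → ℂ)
    (hDzadd : ∀ a b, Dz (a + b) = Dz a + Dz b)
    (covz covzb fE fEd : S → S)
    (hcompat₁ : ∀ u v, Dz (h u v) = h (covz u) v + h u (covzb v))
    (hcompat₂ : ∀ u v, Dzb (h u v) = h (covzb u) v + h u (covz v))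
    (hadj : ∀ u v, h (fE u) v = h u (fEd v))
    (hharm : ∀ u, covz (covzb u) - covzb (covz u) + fE (fEd u) - fEd (fE u) = 0)
    (s : S) (x : ℂ) :
    -(Dz (Dzb (h s s)) x) =
      ((2 * (h (fEd (fE s) - covz (covzb s)) s x).re
        - (h (covz s) (covz s) x).re - (h (covzb s) (covzb s) x).re
        - (h (fE s) (fE s) x).re - (h (fEd s) (fEd s) x).re : ℝ) : ℂ) := by
  have hf : h s (fEd (fE s)) x = (h (fE s) (fE s) x).re := by
    rw [← hadj]
    exact pairing_self_eq_re hherm _ x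
  have hfd : h s (fE (fEd s)) x = (h (fEd s) (fEd s) x).re := by
    rw [hherm, hadj, ← hherm]
    exact pairing_self_eq_re hherm _ x
  rw [dz_dzb_pairing hDzadd hcompat₁ hcompat₂, covzb_covz_eq_of_harmonic hharm,
    pairing_sub_right haddr, haddr, hherm s _ x, pairing_sub_right haddr]
  simp only [Pi.add_apply, Pi.sub_apply]
  rw [hf, hfd, hherm s (covz (covzb s)), pairing_self_eq_re hherm (covz s),
    pairing_self_eq_re hherm (covzb s)]
  apply Complex.ext
  · simp only [Complex.neg_re, Complex.add_re, Complex.sub_re, Complex.conj_re, Complex.ofReal_re,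
      map_sub, Complex.conj_ofReal]
    ring
  · simp

/-- Weitzenböck-type identity for a harmonic bundle over an open subset of `ℂ`.
Sections form an additive group `S`, `h` is the pointwise Hermitian pairing (a
`ℂ`-valued function of the base point), `Dz, Dzb` are the holomorphic and
antiholomorphic derivative operators on functions, `covz, covzb` the components of
the Chern connection (compatible with `h` in the stated sense), and `fE` the Higgs
endomorphism with `h`-adjoint `fEd`, satisfying the harmonicity relation
`∇_z∇_z̄ - ∇_z̄∇_z + [f, f†] = 0`.  Then for any smooth section `s` and base point `x`:
`-∂_z∂_z̄ |s|²_h = 2 Re h((-∇_z∇_z̄ + f†∘f)s, s) - |∇_z s|² - |∇_z̄ s|² - |f s|² - |f† s|²`. -/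
theorem stmt_15 (S : Type*) [AddCommGroup S]
    (h : S → S → ℂ → ℂ)
    (haddl : ∀ u v w, h (u + v) w = h u w + h v w)
    (haddr : ∀ u v w, h u (v + w) = h u v + h u w)
    (hherm : ∀ u v x, h v u x = (starRingEnd ℂ) (h u v x))
    (Dz Dzb : (ℂ → ℂ) → ℂ → ℂ)
    (hDzadd : ∀ a b, Dz (a + b) = Dz a + Dz b)
    (covz covzb fE fEd : S → S)
    (hcompat₁ : ∀ u v, Dz (h u v) = h (covz u) v + h u (covzb v))
    (hcompat₂ : ∀ u v, Dzb (h u v) = h (covzb u) v + h u (covz v))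
    (hadj : ∀ u v, h (fE u) v = h u (fEd v))
    (hharm : ∀ u, covz (covzb u) - covzb (covz u) + fE (fEd u) - fEd (fE u) = 0)
    (s : S) (x : ℂ) :
    -(Dz (Dzb (h s s)) x) =
      ((2 * (h (fEd (fE s) - covz (covzb s)) s x).re
        - (h (covz s) (covz s) x).re - (h (covzb s) (covzb s) x).re
        - (h (fE s) (fE s) x).re - (h (fEd s) (fEd s) x).re : ℝ) : ℂ) :=
  stmt_15_general S h haddr hherm Dz Dzb hDzadd covz covzb fE fEd hcompat₁ hcompat₂ hadj hharm s x
end
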